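/- Let n ≥ 1 and e ∈ [0,1] with n·e ∈ ℕ. Set n₁ = n·e. Suppose losses ℓ : Fin n → ℝ are nonnegative, a set E of size n₁ has ℓ i > log 2 for i ∈ E, and r is a rank bijection assigning E ranks {1,…,n₁}, with n₁ ≥ 1. Then -(1/n) ∑_i ln(1 - r i/(n+1)) ℓ i > (n·log 2/(2(n+1)))·e² + (log 2/(2(n+1)))·e. -/
import Mathlib

lemma sumIccReal (m : ℕ) : (∑ k ∈ Finset.Icc 1 m, (k:ℝ)) = m*(m+1)/2 := by
  induction m with
  | zero => simp
  | succ k ih =>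
      rw [Finset.sum_Icc_succ_top (by omega), ih]
      push_cast; ring

theorem empirical_AURC_lower_bound (n n₁ : ℕ) (hn : 1 ≤ n) (hn₁ : 1 ≤ n₁)
    (e : ℝ) (he : e ∈ Set.Icc (0:ℝ) 1) (hne : (n₁ : ℝ) = n * e)
    (ℓ : Fin n → ℝ) (hℓ : ∀ i, 0 ≤ ℓ i)
    (E : Finset (Fin n)) (hcard : E.card = n₁)
    (hloss : ∀ i ∈ E, Real.log 2 < ℓ i)
    (r : Fin n → ℕ) (hr : ∀ i, r i ∈ Finset.Icc 1 n) (hinj : Function.Injective r)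
    (hranks : E.image r = Finset.Icc 1 n₁) :
    -(1 / (n:ℝ)) * ∑ i, Real.log (1 - (r i : ℝ) / (n + 1)) * ℓ i >
      ((n:ℝ) * Real.log 2 / (2 * (n + 1))) * e ^ 2 +
        (Real.log 2 / (2 * (n + 1))) * e := by
  set c := Real.log 2 with hc
  have hnpos : (0:ℝ) < n := by exact_mod_cast hn
  have hn1pos : (0:ℝ) < (n:ℝ) + 1 := by linarith
  have hrlo : ∀ i, 1 ≤ r i := fun i => (Finset.mem_Icc.mp (hr i)).1
  have hrhi : ∀ i, r i ≤ n := fun i => (Finset.mem_Icc.mp (hr i)).2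
  have hxpos : ∀ i : Fin n, 0 < (r i : ℝ) / (n + 1) := by
    intro i
    apply div_pos _ hn1pos
    exact_mod_cast hrlo i
  have h1x : ∀ i : Fin n, 0 < 1 - (r i : ℝ) / (n + 1) := by
    intro i
    have : (r i : ℝ) < n + 1 := by
      have := hrhi i; have : (r i : ℝ) ≤ n := by exact_mod_cast this
      linarith
    have := (div_lt_one hn1pos).mpr this
    linarith
  have hlog : ∀ i : Fin n, (r i : ℝ) / (n + 1) ≤ -Real.log (1 - (r i : ℝ) / (n + 1)) := by
    intro i
    have := Real.log_le_sub_one_of_pos (h1x i)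
    linarith
  have hEne : E.Nonempty := Finset.card_pos.mp (by omega)
  have hsumr : (∑ i ∈ E, ((r i : ℝ))) = (n₁ : ℝ) * (n₁ + 1) / 2 := by
    have h1 : (∑ i ∈ E, ((r i : ℝ))) = ∑ k ∈ E.image r, (k : ℝ) :=
      (Finset.sum_image (fun a _ b _ h => hinj h)).symm
    rw [h1, hranks, sumIccReal]
  have hcpos : 0 < c := Real.log_pos (by norm_num)
  have key : ((n:ℝ) * c / (2 * (n + 1))) * e ^ 2 + (c / (2 * (n + 1))) * e
      = (1 / n) * ∑ i ∈ E, ((r i : ℝ) / (n + 1)) * c := by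
    rw [← Finset.sum_mul, ← Finset.sum_div, hsumr, hne]
    field_simp
  rw [key]
  have step1 : (1 / (n:ℝ)) * ∑ i ∈ E, ((r i : ℝ) / (n + 1)) * c
      < (1 / n) * ∑ i ∈ E, ((r i : ℝ) / (n + 1)) * ℓ i := by
    apply mul_lt_mul_of_pos_left _ (by positivity)
    exact Finset.sum_lt_sum_of_nonempty hEne
      (fun i hi => mul_lt_mul_of_pos_left (hloss i hi) (hxpos i))
  have step2 : (1 / (n:ℝ)) * ∑ i ∈ E, ((r i : ℝ) / (n + 1)) * ℓ i
      ≤ (1 / n) * ∑ i : Fin n, ((r i : ℝ) / (n + 1)) * ℓ i := by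
    apply mul_le_mul_of_nonneg_left _ (by positivity)
    apply Finset.sum_le_sum_of_subset_of_nonneg (Finset.subset_univ E)
    intro i _ _
    exact mul_nonneg (le_of_lt (hxpos i)) (hℓ i)
  have step3 : (1 / (n:ℝ)) * ∑ i : Fin n, ((r i : ℝ) / (n + 1)) * ℓ i
      ≤ (1 / n) * ∑ i : Fin n, (-Real.log (1 - (r i : ℝ) / (n + 1))) * ℓ i := by
    apply mul_le_mul_of_nonneg_left _ (by positivity)
    exact Finset.sum_le_sum fun i _ => mul_le_mul_of_nonneg_right (hlog i) (hℓ i)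
  have heq : (1 / (n:ℝ)) * ∑ i : Fin n, (-Real.log (1 - (r i : ℝ) / (n + 1))) * ℓ i
      = -(1 / (n:ℝ)) * ∑ i, Real.log (1 - (r i : ℝ) / (n + 1)) * ℓ i := by
    have h : (∑ i : Fin n, (-Real.log (1 - (r i : ℝ) / (n + 1))) * ℓ i)
        = -∑ i : Fin n, Real.log (1 - (r i : ℝ) / (n + 1)) * ℓ i := by
      simp [neg_mul]
    rw [h]; ring
  linarith
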